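/- For reduced cyclic words V and W, the set LP₂(V,W) of linked pairs of V and W contains at most len(V)·len(W) elements. -/

import Mathlib

/-!
Combinatorial model of the Goldman–Turaev Lie bialgebra of curves on a surface
with boundary, following M. Chas, "Combinatorial Lie bialgebras of curves on
surfaces".

The alphabet `𝔸ₙ = {a₁,…,aₙ, ā₁,…,āₙ}` is modelled by `Letter n := Fin n × Bool`,
with the bar involution flipping the boolean.  Linear words are lists of letters;
a cyclic word is a list up to rotation (`List.IsRotated`).
-/

open List

abbrev Letter (n : ℕ) := Fin n × Bool

namespace ChasCW

variable {n : ℕ}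

/-- The bar involution `x ↦ x̄` on letters. -/
def bar (x : Letter n) : Letter n := (x.1, !x.2)

/-- The formal inverse `W̄` of a linear word `W`. -/
def wordInv (w : List (Letter n)) : List (Letter n) := (w.map bar).reverse

/-- A linear word is freely reduced if no letter is followed by its inverse. -/
def Reduced (w : List (Letter n)) : Prop := w.Chain' (fun a b => b ≠ bar a)

/-- A nonempty word all of whose cyclic rotations are freely reduced:
a representative of a reduced cyclic word. -/
def CyclicallyReduced (w : List (Letter n)) : Prop :=
  w ≠ [] ∧ ∀ i, Reduced (w.rotate i)

/-- The type of cyclic words: lists of letters up to rotation. -/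
abbrev CWord (n : ℕ) := Quotient (List.IsRotated.setoid (Letter n))

/-- The cyclic word `c(w)` determined by a linear word `w`. -/
def cw (w : List (Letter n)) : CWord n := Quotient.mk _ w

/-- A surface symbol: a reduced cyclic word containing every letter of the
alphabet exactly once. -/
def SurfaceSymbol (O : List (Letter n)) : Prop :=
  CyclicallyReduced O ∧ ∀ x : Letter n, O.count x = 1

/-- `w` embeds injectively and orientation-preservingly as a cyclic subsequence
of the cyclic word `O`. -/
def CyclicEmbeds (w O : List (Letter n)) : Prop :=
  w.Nodup ∧ ∃ i ≤ w.length, ∃ j ≤ O.length, (w.rotate i).Sublist (O.rotate j)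

open Classical in
/-- The orientation `o(w) ∈ {-1,0,1}` of a cyclic word relative to the surface
symbol `O`: `1` for an orientation-preserving embedding of rings, `-1` for an
orientation-reversing one, `0` otherwise. -/
noncomputable def orient (O w : List (Letter n)) : ℤ :=
  if CyclicEmbeds w O then 1 else if CyclicEmbeds w O.reverse then -1 else 0

/-- Case (1) of Definition 2.1: `P = p₁p₂`, `Q = q₁q₂` and
`o(c(p̄₁q̄₁p₂q₂)) ≠ 0`. -/
def Linked1 (O : List (Letter n)) (p₁ p₂ q₁ q₂ : Letter n) : Prop :=
  Reduced [p₁, p₂] ∧ Reduced [q₁, q₂] ∧ orient O [bar p₁, bar q₁, p₂, q₂] ≠ 0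

/-- Case (2) of Definition 2.1: `P = p₁Yp₂`, `Q = q₁Yq₂`, `p₁ ≠ q₁`, `p₂ ≠ q₂`,
`Y = x₁X x₂` nonempty, and `o(c(p̄₁q̄₁x₁)) = o(c(p₂q₂x̄₂))`. -/
def Linked2 (O : List (Letter n)) (p₁ p₂ q₁ q₂ x₁ x₂ : Letter n)
    (Y : List (Letter n)) : Prop :=
  Y ≠ [] ∧ Y.head? = some x₁ ∧ Y.getLast? = some x₂ ∧
  p₁ ≠ q₁ ∧ p₂ ≠ q₂ ∧
  Reduced (p₁ :: (Y ++ [p₂])) ∧ Reduced (q₁ :: (Y ++ [q₂])) ∧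
  orient O [bar p₁, bar q₁, x₁] = orient O [p₂, q₂, bar x₂]

/-- Case (3) of Definition 2.1: `P = p₁Yp₂`, `Q = q₁Ȳq₂`, `p₁ ≠ q̄₂`, `p₂ ≠ q̄₁`,
`Y = x₁X x₂` nonempty, and `o(c(q₂p̄₁x₁)) = o(c(q̄₁p₂x̄₂))`. -/
def Linked3 (O : List (Letter n)) (p₁ p₂ q₁ q₂ x₁ x₂ : Letter n)
    (Y : List (Letter n)) : Prop :=
  Y ≠ [] ∧ Y.head? = some x₁ ∧ Y.getLast? = some x₂ ∧
  p₁ ≠ bar q₂ ∧ p₂ ≠ bar q₁ ∧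
  Reduced (p₁ :: (Y ++ [p₂])) ∧ Reduced (q₁ :: (wordInv Y ++ [q₂])) ∧
  orient O [q₂, bar p₁, x₁] = orient O [bar q₁, p₂, bar x₂]

/-- `(P,Q)` is an `O`-linked pair (Definition 2.1). -/
def LinkedPair (O P Q : List (Letter n)) : Prop :=
  (∃ p₁ p₂ q₁ q₂, P = [p₁, p₂] ∧ Q = [q₁, q₂] ∧ Linked1 O p₁ p₂ q₁ q₂) ∨
  (∃ p₁ p₂ q₁ q₂ x₁ x₂ Y, P = p₁ :: (Y ++ [p₂]) ∧ Q = q₁ :: (Y ++ [q₂]) ∧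
    Linked2 O p₁ p₂ q₁ q₂ x₁ x₂ Y) ∨
  (∃ p₁ p₂ q₁ q₂ x₁ x₂ Y, P = p₁ :: (Y ++ [p₂]) ∧ Q = q₁ :: (wordInv Y ++ [q₂]) ∧
    Linked3 O p₁ p₂ q₁ q₂ x₁ x₂ Y)

/-- The sign of a linked pair `(P,Q)`, computed from the (unique) decomposition
of `P` and `Q` prescribed by Definition 2.1. -/
noncomputable def signLP (O P Q : List (Letter n)) : ℤ :=
  match P, Q with
  | p₁ :: P', q₁ :: Q' =>
    match P'.getLast?, Q'.getLast? with
    | some p₂, some q₂ =>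
      let Y := P'.dropLast
      let Z := Q'.dropLast
      if Y = [] then orient O [bar p₁, bar q₁, p₂, q₂]
      else
        match Y.head?, Y.getLast? with
        | some x₁, some _ =>
          if Z = wordInv Y then orient O [q₂, bar p₁, x₁]
          else orient O [bar p₁, bar q₁, x₁]
        | _, _ => 0
    | _, _ => 0
  | _, _ => 0

/-- The subword of length `l` of (a large power of) the cyclic word `V`,
starting at position `i`.  This encodes occurrences of subwords of powers
of `V`. -/
def segment (V : List (Letter n)) (i l : ℕ) : List (Letter n) :=
  (((List.replicate (l + 1) V).flatten).rotate i).take l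

/-- The set `LP₁(W)` of linked pairs of occurrences of subwords of `W`,
an occurrence being encoded by its starting position and its length. -/
def LP1 (O W : List (Letter n)) : Set ((ℕ × ℕ) × (ℕ × ℕ)) :=
  {e | e.1.1 < W.length ∧ e.2.1 < W.length ∧ e.1.2 ≤ W.length ∧ e.2.2 ≤ W.length ∧
    LinkedPair O (segment W e.1.1 e.1.2) (segment W e.2.1 e.2.2)}

/-- The set `LP₂(V,W)` of linked pairs of the pair of cyclic words `(V,W)`:
pairs of occurrences of subwords of powers of `V` resp. `W` which are linked.
(The normalization `len V^{j-1} < len P ≤ len V^j` is implicit in the encoding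
of an occurrence by a starting position `< len V` and a length.) -/
def LP2 (O V W : List (Letter n)) : Set ((ℕ × ℕ) × (ℕ × ℕ)) :=
  {e | e.1.1 < V.length ∧ e.2.1 < W.length ∧
    LinkedPair O (segment V e.1.1 e.1.2) (segment W e.2.1 e.2.2)}

end ChasCW

/-!
Charge a linked pair `(P, Q)` to a pair of positions `(i, c)` with `i < len V`, `c < len W`:
`i` is where `P = p₁ Y p₂` starts, and `c` is where `Q` starts (types (1), (2)) or where the
block `Ȳ` of `Q = q₁ Ȳ q₂` ends (type (3)). The slot determines the pair: `len Y` is the first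
place where reading `V` forwards from `i + 1` disagrees with reading `W` forwards from `c + 1`
(types (1), (2)), resp. with reading `W` backwards from `c` and barring (type (3)). The two
kinds cannot share a slot, since in type (3) the letter of `V` at `i + 1` is the bar of the
letter of `W` at `c`, which types (1) and (2) forbid.
-/

namespace ChasCW

section CyclicGet

variable {α : Type*}

def cyclicGet (V : List α) (t : ℕ) : Option α := V[t % V.length]?

theorem cyclicGet_mod (V : List α) (t : ℕ) : cyclicGet V (t % V.length) = cyclicGet V t := by
  simp only [cyclicGet, Nat.mod_mod]

theorem cyclicGet_sub_of_modEq {V : List α} {c c' j : ℕ} (h : c ≡ c' [MOD V.length])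
    (hc : j ≤ c) (hc' : j ≤ c') : cyclicGet V (c - j) = cyclicGet V (c' - j) := by
  have : c - j ≡ c' - j [MOD V.length] :=
    Nat.ModEq.add_right_cancel' j (by rwa [Nat.sub_add_cancel hc, Nat.sub_add_cancel hc'])
  rw [cyclicGet, this, cyclicGet]

theorem getElem?_flatten_replicate (V : List α) {m t : ℕ} (ht : t < m * V.length) :
    (replicate m V).flatten[t]? = cyclicGet V t := by
  induction m generalizing t with
  | zero => simp at ht
  | succ m ih =>
    rw [replicate_succ, flatten_cons]
    rcases lt_or_ge t V.length with h | h
    · rw [getElem?_append_left h, cyclicGet, Nat.mod_eq_of_lt h]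
    · rw [getElem?_append_right h, ih (by rw [Nat.succ_mul] at ht; omega), cyclicGet, cyclicGet,
        Nat.mod_eq_sub_mod h]

end CyclicGet

def FirstDiffAt {β : Type*} (f g : ℕ → β) (L : ℕ) : Prop :=
  (∀ j < L, f j = g j) ∧ f L ≠ g L

theorem FirstDiffAt.unique {β : Type*} {f g g' : ℕ → β} {L L' : ℕ} (h : FirstDiffAt f g L)
    (h' : FirstDiffAt f g' L') (hg : ∀ j ≤ min L L', g j = g' j) : L = L' := by
  rcases lt_trichotomy L L' with hlt | rfl | hlt
  · exact absurd ((h'.1 L hlt).trans (hg L (by omega)).symm) h.2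
  · rfl
  · exact absurd ((h.1 L' hlt).trans (hg L' (by omega))) h'.2

variable {n : ℕ}

@[simp]
theorem bar_bar (x : Letter n) : bar (bar x) = x := by
  simp [bar]

theorem getElem?_wordInv {Y : List (Letter n)} {j : ℕ} (hj : j < Y.length) :
    (wordInv Y)[j]? = Y[Y.length - 1 - j]?.map bar := by
  rw [wordInv, getElem?_reverse (by simpa using hj), getElem?_map, length_map]

theorem getElem?_segment (V : List (Letter n)) {i l j : ℕ} (hj : j < l) :
    (segment V i l)[j]? = cyclicGet V (i + j) := by
  rcases eq_or_ne V [] with rfl | hV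
  · simp [segment, cyclicGet]
  have hlen : l < (l + 1) * V.length := by
    have := List.length_pos_iff.2 hV
    nlinarith
  rw [segment, getElem?_take_of_lt hj, getElem?_rotate (by simp; omega),
    getElem?_flatten_replicate _ (by simp; exact Nat.mod_lt _ (by omega)), length_flatten,
    map_replicate, sum_replicate, smul_eq_mul, ← cyclicGet_mod,
    Nat.mod_mod_of_dvd _ (dvd_mul_left _ _), cyclicGet_mod, Nat.add_comm]

theorem length_segment {V : List (Letter n)} (hV : V ≠ []) (i l : ℕ) :
    (segment V i l).length = l := by
  have := List.length_pos_iff.2 hV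
  have : l ≤ (l + 1) * V.length := by nlinarith
  simp [segment, length_flatten, this]

theorem cyclicGet_of_segment_eq {V P : List (Letter n)} {i l j : ℕ} (h : segment V i l = P)
    (hj : j < l) : cyclicGet V (i + j) = P[j]? :=
  h ▸ (getElem?_segment V hj).symm

def ParallelPair (P Q : List (Letter n)) : Prop :=
  ∃ p₁ p₂ q₁ q₂ Y, P = p₁ :: (Y ++ [p₂]) ∧ Q = q₁ :: (Y ++ [q₂]) ∧ p₂ ≠ q₂ ∧
    (Y ++ [p₂]).head? ≠ some (bar q₁)

def AntiparallelPair (P Q : List (Letter n)) : Prop :=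
  ∃ p₁ p₂ q₁ q₂ Y, Y ≠ [] ∧ P = p₁ :: (Y ++ [p₂]) ∧ Q = q₁ :: (wordInv Y ++ [q₂]) ∧
    p₂ ≠ bar q₁

theorem nodup_of_orient_ne_zero {O w : List (Letter n)} (h : orient O w ≠ 0) : w.Nodup := by
  unfold orient at h
  split_ifs at h with h₁ h₂
  exacts [h₁.1, h₂.1, absurd rfl h]

theorem LinkedPair.parallel_of_not_antiparallel {O P Q : List (Letter n)} (h : LinkedPair O P Q)
    (ha : ¬ AntiparallelPair P Q) : ParallelPair P Q := by
  rcases h with ⟨p₁, p₂, q₁, q₂, rfl, rfl, -, -, hO⟩ |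
    ⟨p₁, p₂, q₁, q₂, x₁, x₂, Y, rfl, rfl, -, hx₁, -, -, hp₂, -, hQ, -⟩ |
    ⟨p₁, p₂, q₁, q₂, -, -, Y, rfl, rfl, hY, -, -, -, hp₂, -⟩
  · obtain ⟨-, ⟨hq₁p₂, -⟩, ⟨hp₂q₂, -⟩, -⟩ := by
      simpa only [nodup_cons, mem_cons, not_or] using nodup_of_orient_ne_zero hO
    exact ⟨p₁, p₂, q₁, q₂, [], rfl, rfl, hp₂q₂, by simpa using Ne.symm hq₁p₂⟩
  · obtain ⟨Y, rfl⟩ : ∃ Y', Y = x₁ :: Y' := by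
      cases Y with
      | nil => simp at hx₁
      | cons y Y' => exact ⟨Y', by simpa using hx₁⟩
    refine ⟨p₁, p₂, q₁, q₂, x₁ :: Y, rfl, rfl, hp₂, ?_⟩
    simpa [Reduced] using hQ.rel
  · exact absurd ⟨p₁, p₂, q₁, q₂, Y, hY, rfl, rfl, hp₂⟩ ha

section Occurrences

variable {V W : List (Letter n)} {i l k m : ℕ}

theorem ParallelPair.firstDiffAt (hV : V ≠ []) (hW : W ≠ [])
    (h : ParallelPair (segment V i l) (segment W k m)) :
    ∃ L, l = L + 2 ∧ m = L + 2 ∧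
      FirstDiffAt (fun j ↦ cyclicGet V (i + (j + 1))) (fun j ↦ cyclicGet W (k + (j + 1))) L ∧
      cyclicGet V (i + 1) ≠ (cyclicGet W k).map bar := by
  obtain ⟨p₁, p₂, q₁, q₂, Y, hP, hQ, hp₂, hhead⟩ := h
  have hl : l = Y.length + 2 := by simpa [length_segment hV] using congrArg length hP
  have hm : m = Y.length + 2 := by simpa [length_segment hW] using congrArg length hQ
  refine ⟨Y.length, hl, hm, ⟨fun j hj ↦ ?_, ?_⟩, ?_⟩
  · dsimp only
    rw [cyclicGet_of_segment_eq hP (by omega), cyclicGet_of_segment_eq hQ (by omega)]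
    simp [getElem?_append_left hj]
  · dsimp only
    rw [cyclicGet_of_segment_eq hP (by omega), cyclicGet_of_segment_eq hQ (by omega)]
    simpa using hp₂
  · rw [cyclicGet_of_segment_eq hP (by omega), ← Nat.add_zero k,
      cyclicGet_of_segment_eq hQ (by omega)]
    cases Y <;> simpa using hhead

theorem AntiparallelPair.firstDiffAt (hV : V ≠ []) (hW : W ≠ [])
    (h : AntiparallelPair (segment V i l) (segment W k m)) :
    ∃ L, 0 < L ∧ l = L + 2 ∧ m = L + 2 ∧
      FirstDiffAt (fun j ↦ cyclicGet V (i + (j + 1)))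
        (fun j ↦ (cyclicGet W (k + L - j)).map bar) L := by
  obtain ⟨p₁, p₂, q₁, q₂, Y, hY, hP, hQ, hp₂⟩ := h
  have hl : l = Y.length + 2 := by simpa [length_segment hV] using congrArg length hP
  have hm : m = Y.length + 2 := by simpa [length_segment hW, wordInv] using congrArg length hQ
  refine ⟨Y.length, length_pos_iff.2 hY, hl, hm, ⟨fun j hj ↦ ?_, ?_⟩⟩
  · dsimp only
    rw [cyclicGet_of_segment_eq hP (by omega),
      show k + Y.length - j = k + (Y.length - 1 - j + 1) by omega,
      cyclicGet_of_segment_eq hQ (by omega)]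
    have hj' : Y.length - 1 - j < (wordInv Y).length := by simp [wordInv]; omega
    rw [getElem?_cons_succ, getElem?_cons_succ, getElem?_append_left hj,
      getElem?_append_left hj', getElem?_wordInv (by omega),
      show Y.length - 1 - (Y.length - 1 - j) = j by omega]
    simp [Option.map_map, Function.comp_def]
  · dsimp only
    rw [cyclicGet_of_segment_eq hP (by omega), Nat.add_sub_cancel, ← Nat.add_zero k,
      cyclicGet_of_segment_eq hQ (by omega)]
    simpa using hp₂

end Occurrences

open Classical in
noncomputable def slot (V W : List (Letter n)) (e : (ℕ × ℕ) × (ℕ × ℕ)) : ℕ × ℕ :=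
  (e.1.1, if AntiparallelPair (segment V e.1.1 e.1.2) (segment W e.2.1 e.2.2)
    then (e.2.1 + (e.1.2 - 2)) % W.length else e.2.1)

theorem mapsTo_slot (O V W : List (Letter n)) :
    Set.MapsTo (slot V W) (LP2 O V W)
      (Finset.range V.length ×ˢ Finset.range W.length : Finset (ℕ × ℕ)) := by
  rintro ⟨⟨i, l⟩, k, m⟩ ⟨hi, hk, -⟩
  simp only [slot, Finset.coe_product, Finset.coe_range, Set.mem_prod, Set.mem_Iio]
  exact ⟨hi, by split_ifs <;> [exact Nat.mod_lt _ (by omega); exact hk]⟩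

theorem injOn_slot (O V W : List (Letter n)) : Set.InjOn (slot V W) (LP2 O V W) := by
  rintro ⟨⟨i, l⟩, k, m⟩ ⟨hi, hk, he⟩ ⟨⟨i', l'⟩, k', m'⟩ ⟨hi', hk', he'⟩ h
  dsimp only at hi hk he hi' hk' he'
  have hV : V ≠ [] := ne_nil_of_length_pos (by omega)
  have hW : W ≠ [] := ne_nil_of_length_pos (by omega)
  simp only [slot, Prod.mk.injEq] at h
  obtain ⟨rfl, h⟩ := h
  by_cases ha : AntiparallelPair (segment V i l) (segment W k m) <;>
    by_cases ha' : AntiparallelPair (segment V i l') (segment W k' m') <;>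
    simp only [ha, ha', if_true, if_false] at h
  · obtain ⟨L, hL, rfl, rfl, hd⟩ := ha.firstDiffAt hV hW
    obtain ⟨L', hL', rfl, rfl, hd'⟩ := ha'.firstDiffAt hV hW
    simp only [Nat.add_sub_cancel] at h
    obtain rfl : L = L' := hd.unique hd' fun j hj ↦
      congrArg _ (cyclicGet_sub_of_modEq h (by omega) (by omega))
    obtain rfl : k = k' := by
      simpa [Nat.ModEq, Nat.mod_eq_of_lt hk, Nat.mod_eq_of_lt hk'] using
        Nat.ModEq.add_right_cancel' L h
    rfl
  · obtain ⟨L, hL, rfl, rfl, hd⟩ := ha.firstDiffAt hV hW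
    obtain ⟨L', rfl, rfl, -, hne⟩ := (he'.parallel_of_not_antiparallel ha').firstDiffAt hV hW
    simp only [Nat.add_sub_cancel] at h
    exact absurd (by simpa [← h, cyclicGet_mod] using hd.1 0 hL) hne
  · obtain ⟨L, rfl, rfl, -, hne⟩ := (he.parallel_of_not_antiparallel ha).firstDiffAt hV hW
    obtain ⟨L', hL', rfl, rfl, hd'⟩ := ha'.firstDiffAt hV hW
    simp only [Nat.add_sub_cancel] at h
    exact absurd (by simpa [h, cyclicGet_mod] using hd'.1 0 hL') hne
  · subst h
    obtain ⟨L, rfl, rfl, hd, -⟩ := (he.parallel_of_not_antiparallel ha).firstDiffAt hV hW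
    obtain ⟨L', rfl, rfl, hd', -⟩ := (he'.parallel_of_not_antiparallel ha').firstDiffAt hV hW
    obtain rfl : L = L' := hd.unique hd' fun _ _ ↦ rfl
    rfl

theorem LP2_card_le_general {n : ℕ} (O V W : List (Letter n)) :
    (LP2 O V W).Finite ∧ (LP2 O V W).ncard ≤ V.length * W.length := by
  have hmaps := mapsTo_slot O V W
  have hinj := injOn_slot O V W
  refine ⟨Set.Finite.of_injOn hmaps hinj (Finset.finite_toSet _), ?_⟩
  simpa using Set.ncard_le_ncard_of_injOn _ hmaps hinj (Finset.finite_toSet _)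

/-- Proposition 2.7(a): for reduced cyclic words `V` and `W`, the
set `LP₂(V,W)` of linked pairs of `V` and `W` is finite and has at most
`len V · len W` elements. -/
theorem LP2_card_le {n : ℕ} (O V W : List (Letter n))
    (hO : SurfaceSymbol O) (hV : CyclicallyReduced V) (hW : CyclicallyReduced W) :
    (LP2 O V W).Finite ∧ (LP2 O V W).ncard ≤ V.length * W.length :=
  LP2_card_le_general O V W

end ChasCW
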